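/- arXiv:math/0608277 — 2 statements merged into one kernel-verified Lean document; each statement's English description precedes it below -/
import Mathlib

section
/- Let h : [0,1) → [0,1) be a measurable bijection for which there exist a measurable partition {A_k}_{k∈ℤ} of [1/2,1) and a measurable partition {B_k}_{k∈ℤ} of [0,1/2) such that h(x) = frac(2^k x) for x ∈ A_k and h(x) = frac(2^k(x−1)) for x ∈ B_k. Then there exists a regularized wavelet set W such that h = h̃_W. -/
open MeasureTheory Set Real Filter
open scoped symmDiff Classical

noncomputable section

/-- The Littlewood–Paley set `E = [-2π,-π) ∪ [π,2π)`. -/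
def E : Set ℝ := Ico (-(2*π)) (-π) ∪ Ico π (2*π)

/-- `tau x = x + 2jπ`, where `j` is the unique integer with `x + 2jπ ∈ E`. -/
def tau (x : ℝ) : ℝ :=
  if x - 2*π*(⌊x/(2*π)⌋ : ℝ) < π then x - 2*π*(⌊x/(2*π)⌋ : ℝ) - 2*π
  else x - 2*π*(⌊x/(2*π)⌋ : ℝ)

/-- `delta x = 2^k x`, where (for `x ≠ 0`) `k` is the unique integer with `2^k x ∈ E`. -/
def delta (x : ℝ) : ℝ :=
  if 0 < x then (2:ℝ)^(⌈Real.logb 2 (π/x)⌉) * x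
  else (2:ℝ)^(⌊Real.logb 2 (2*π/(-x))⌋) * x

/-- The map `ξ : E → [0,1)`. -/
def xiMap (x : ℝ) : ℝ := if x < 0 then x/(2*π) + 1 else x/(2*π)

/-- The inverse `ξ⁻¹ : [0,1) → E`. -/
def xiInv (y : ℝ) : ℝ := if y < 1/2 then 2*π*(y-1) else 2*π*y

/-- The translates `{W + 2kπ}_{k ∈ ℤ}` form a partition of `ℝ`. -/
def TransPartition (W : Set ℝ) : Prop :=
  (⋃ k : ℤ, (fun x : ℝ => x + 2*π*(k:ℝ)) '' W) = univ ∧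
  Pairwise fun k l : ℤ =>
    Disjoint ((fun x : ℝ => x + 2*π*(k:ℝ)) '' W) ((fun x : ℝ => x + 2*π*(l:ℝ)) '' W)

/-- The dilates `{2^k W}_{k ∈ ℤ}` form a partition of `ℝ \ {0}`. -/
def DilPartition (W : Set ℝ) : Prop :=
  (⋃ k : ℤ, (fun x : ℝ => (2:ℝ)^k * x) '' W) = {(0:ℝ)}ᶜ ∧
  Pairwise fun k l : ℤ =>
    Disjoint ((fun x : ℝ => (2:ℝ)^k * x) '' W) ((fun x : ℝ => (2:ℝ)^l * x) '' W)

/-- A regularized wavelet set. -/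
def IsRegularizedWaveletSet (W : Set ℝ) : Prop :=
  MeasurableSet W ∧ TransPartition W ∧ DilPartition W

/-- The wavelet induced isomorphism `h̃_W = ξ ∘ τ|_W ∘ (δ|_W)⁻¹ ∘ ξ⁻¹` of `[0,1)`. -/
def hIso (W : Set ℝ) : ℝ → ℝ :=
  fun t => xiMap (tau (Function.invFunOn delta W (xiInv t)))

/-- The class of wavelet induced maps of `[0,1)` (Proposition 2.3 (i)-(ii)). -/
def IsWaveletInduced (h : ℝ → ℝ) : Prop :=
  Set.BijOn h (Ico (0:ℝ) 1) (Ico (0:ℝ) 1) ∧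
  Measurable ((Ico (0:ℝ) 1).restrict h) ∧
  ∃ A B : ℤ → Set ℝ,
    (∀ k, MeasurableSet (A k)) ∧ (∀ k, MeasurableSet (B k)) ∧
    (⋃ k, A k) = Ico (1/2 : ℝ) 1 ∧ Pairwise (Function.onFun Disjoint A) ∧
    (⋃ k, B k) = Ico (0:ℝ) (1/2) ∧ Pairwise (Function.onFun Disjoint B) ∧
    (∀ k, ∀ x ∈ A k, h x = Int.fract ((2:ℝ)^k * x)) ∧
    (∀ k, ∀ x ∈ B k, h x = Int.fract ((2:ℝ)^k * (x - 1)))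

/-- The class `WI₁`. -/
def MemWI1 (f : ℝ → ℝ) : Prop :=
  ∃ A B : ℕ → Set ℝ,
    (∀ k, MeasurableSet (A k)) ∧ (∀ k, MeasurableSet (B k)) ∧
    (⋃ k, A k) = Ico (1/2 : ℝ) 1 ∧ Pairwise (Function.onFun Disjoint A) ∧
    (⋃ k, B k) = Ico (0:ℝ) (1/2) ∧ Pairwise (Function.onFun Disjoint B) ∧
    (∀ k, ∀ x ∈ A k, f x = x / 2^(k+1)) ∧
    (∀ k, ∀ x ∈ B k, f x = (x - 1) / 2^(k+1) + 1)

/-- The class `WI₂`. -/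
def MemWI2 (g : ℝ → ℝ) : Prop :=
  Measurable ((Ico (0:ℝ) 1).restrict g) ∧
  Set.MapsTo g (Ico (0:ℝ) 1) (Ico (0:ℝ) 1) ∧
  Set.InjOn g (Ico (0:ℝ) 1) ∧
  ∀ x ∈ Ico (0:ℝ) 1, ∃ k l : ℕ, g x = (x + l) / 2^k

/-- The Schröder–Cantor–Bernstein map `u ⋄ v` for injections between arbitrary types. -/
def scb {α β : Type*} (u : α → β) (v : β → α) : α → β :=
  fun x =>
    if x ∈ ⋃ k : ℕ, (v ∘ u)^[k] '' (Set.range v)ᶜ then u x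
    else if h2 : x ∈ Set.range v then Classical.choose h2
    else u x

/-- The Schröder–Cantor–Bernstein map `u ⋄ v` for maps of `[0,1)`. -/
def scbOn (u v : ℝ → ℝ) : ℝ → ℝ :=
  fun x =>
    if x ∈ ⋃ k : ℕ, (v ∘ u)^[k] '' (Ico (0:ℝ) 1 \ v '' (Ico (0:ℝ) 1)) then u x
    else Function.invFunOn v (Ico (0:ℝ) 1) x

/-- The metric `d` on wavelet sets. -/
def dws (W₁ W₂ : Set ℝ) : ℝ :=
  Real.sqrt (volume (W₁ ∆ W₂)).toReal + Real.sqrt (∫ x in W₁ ∆ W₂, |x|⁻¹)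

/-- The measure `ν` on `[0,1)` with density `(1-x)⁻¹` on `[0,1/2)` and `x⁻¹` on `[1/2,1)`. -/
def nuMeasure : Measure ℝ :=
  volume.withDensity (fun x =>
    ENNReal.ofReal (if x ∈ Ico (0:ℝ) (1/2) then (1-x)⁻¹
      else if x ∈ Ico (1/2:ℝ) 1 then x⁻¹ else 0))

/-
The set is `W = ⋃ₖ 2ᵏ ξ⁻¹(A_k ∪ B_k)`. For `t ∈ A_k ∪ B_k` the point `w = 2ᵏ ξ⁻¹(t)` satisfies
`δ w = ξ⁻¹ t` and, since `ξ⁻¹ t / 2π` is `t` on `A_k` and `t - 1` on `B_k`, also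
`τ w = ξ⁻¹(frac(w / 2π)) = ξ⁻¹(h t)`. As `{A_k ∪ B_k}` partitions `[0,1)` and `ξ⁻¹`, `h` are
bijections, both `δ|_W` and `τ|_W` are bijections onto `E`, which is exactly the partition
property of the translates and dilates of `W`, and `h̃_W t = ξ(τ w) = h t`.
-/

lemma zpow_ceil_logb_div_mul_mem_Ico {a y : ℝ} (ha : 0 < a) (hy : 0 < y) :
    (2:ℝ) ^ ⌈logb 2 (a / y)⌉ * y ∈ Ico a (2 * a) := by
  set j := ⌈logb 2 (a / y)⌉
  have hay : 0 < a / y := div_pos ha hy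
  have hle : a / y ≤ (2:ℝ) ^ j := by
    rw [← rpow_intCast, ← logb_le_iff_le_rpow one_lt_two hay]
    exact Int.le_ceil _
  have hlt : (2:ℝ) ^ (j - 1) < a / y := by
    rw [← rpow_intCast, ← lt_logb_iff_rpow_lt one_lt_two hay, Int.cast_sub, Int.cast_one]
    linarith [Int.ceil_lt_add_one (logb 2 (a / y))]
  rw [zpow_sub₀ two_ne_zero, zpow_one] at hlt
  rw [div_le_iff₀ hy] at hle
  rw [lt_div_iff₀ hy] at hlt
  constructor <;> linarith

lemma zpow_floor_logb_div_mul_mem_Ioc {a y : ℝ} (ha : 0 < a) (hy : 0 < y) :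
    (2:ℝ) ^ ⌊logb 2 (a / y)⌋ * y ∈ Ioc (a / 2) a := by
  set j := ⌊logb 2 (a / y)⌋
  have hay : 0 < a / y := div_pos ha hy
  have hle : (2:ℝ) ^ j ≤ a / y := by
    rw [← rpow_intCast, ← le_logb_iff_rpow_le one_lt_two hay]
    exact Int.floor_le _
  have hlt : a / y < (2:ℝ) ^ (j + 1) := by
    rw [← rpow_intCast, ← logb_lt_iff_lt_rpow one_lt_two hay, Int.cast_add, Int.cast_one]
    exact Int.lt_floor_add_one _
  rw [zpow_add₀ two_ne_zero, zpow_one] at hlt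
  rw [le_div_iff₀ hy] at hle
  rw [div_lt_iff₀ hy] at hlt
  constructor <;> linarith

lemma mul_notMem_E_of_two_le {y c : ℝ} (hy : y ∈ E) (hc : 2 ≤ c) : c * y ∉ E := by
  have := pi_pos
  rcases hy with ⟨h1, h2⟩ | ⟨h1, h2⟩ <;> rintro (⟨h3, h4⟩ | ⟨h3, h4⟩) <;> nlinarith

lemma zero_notMem_E : (0:ℝ) ∉ E := by
  have := pi_pos
  rintro (⟨h1, h2⟩ | ⟨h1, h2⟩) <;> linarith

lemma eq_of_zpow_mul_mem_E {x : ℝ} {j k : ℤ} (hj : (2:ℝ) ^ j * x ∈ E)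
    (hk : (2:ℝ) ^ k * x ∈ E) : j = k := by
  wlog hjk : j < k generalizing j k
  · rcases (not_lt.1 hjk).lt_or_eq with h | h
    · exact (this hk hj h).symm
    · exact h.symm
  have h2 : (2:ℝ) ≤ 2 ^ (k - j) := by
    simpa using zpow_le_zpow_right₀ one_le_two (show (1:ℤ) ≤ k - j by omega)
  refine absurd ?_ (mul_notMem_E_of_two_le hj h2)
  rwa [← mul_assoc, ← zpow_add₀ two_ne_zero, sub_add_cancel]

lemma delta_zero : delta 0 = 0 := by simp [delta]

lemma exists_delta_eq_zpow_mul (x : ℝ) : ∃ k : ℤ, delta x = (2:ℝ) ^ k * x := by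
  unfold delta; split_ifs
  exacts [⟨_, rfl⟩, ⟨_, rfl⟩]

lemma delta_mem_E {x : ℝ} (hx : x ≠ 0) : delta x ∈ E := by
  rcases hx.lt_or_gt with hx | hx
  · obtain ⟨h1, h2⟩ := zpow_floor_logb_div_mul_mem_Ioc two_pi_pos (neg_pos.2 hx)
    rw [delta, if_neg hx.not_gt]
    left; constructor <;> linarith
  · obtain ⟨h1, h2⟩ := zpow_ceil_logb_div_mul_mem_Ico pi_pos hx
    rw [delta, if_pos hx]
    right; constructor <;> linarith

lemma ne_zero_of_delta_mem_E {x : ℝ} (hx : delta x ∈ E) : x ≠ 0 := by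
  rintro rfl
  exact zero_notMem_E (delta_zero ▸ hx)

lemma delta_eq_of_zpow_mul_mem_E {x : ℝ} {j : ℤ} (hj : (2:ℝ) ^ j * x ∈ E) :
    delta x = 2 ^ j * x := by
  have hx : x ≠ 0 := by rintro rfl; exact zero_notMem_E (by simpa using hj)
  obtain ⟨k, hk⟩ := exists_delta_eq_zpow_mul x
  have hkE : (2:ℝ) ^ k * x ∈ E := hk ▸ delta_mem_E hx
  rw [hk, eq_of_zpow_mul_mem_E hkE hj]

lemma delta_eq_delta_iff {x y : ℝ} (hx : x ≠ 0) :
    delta x = delta y ↔ ∃ k : ℤ, (2:ℝ) ^ k * x = y := by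
  obtain ⟨a, ha⟩ := exists_delta_eq_zpow_mul x
  constructor
  · intro hxy
    obtain ⟨b, hb⟩ := exists_delta_eq_zpow_mul y
    refine ⟨a - b, ?_⟩
    rw [zpow_sub₀ two_ne_zero]
    field_simp
    rw [← ha, ← hb, hxy]
  · rintro ⟨k, rfl⟩
    have hE : (2:ℝ) ^ (a - k) * (2 ^ k * x) ∈ E := by
      rw [← mul_assoc, ← zpow_add₀ two_ne_zero, sub_add_cancel, ← ha]
      exact delta_mem_E hx
    rw [delta_eq_of_zpow_mul_mem_E hE, ← mul_assoc, ← zpow_add₀ two_ne_zero, sub_add_cancel, ha]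

lemma xiInv_injective : Function.Injective xiInv := by
  intro s t hst
  have := pi_pos
  unfold xiInv at hst
  split_ifs at hst with hs ht ht <;> nlinarith

lemma measurable_xiInv : Measurable xiInv :=
  Measurable.ite measurableSet_Iio (by fun_prop) (by fun_prop)

lemma xiMap_xiInv (t : ℝ) : xiMap (xiInv t) = t := by
  have := pi_pos
  by_cases h : t < 1 / 2
  · rw [xiInv, if_pos h, xiMap, if_pos (by nlinarith)]
    field_simp; ring
  · rw [xiInv, if_neg h, xiMap, if_neg (by nlinarith)]
    field_simp

lemma xiInv_mem_E {t : ℝ} (ht : t ∈ Ico (0:ℝ) 1) : xiInv t ∈ E := by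
  obtain ⟨h0, h1⟩ := ht
  have := pi_pos
  unfold xiInv E
  split_ifs with h
  · left; constructor <;> nlinarith
  · right; constructor <;> nlinarith

lemma mapsTo_xiMap : MapsTo xiMap E (Ico (0:ℝ) 1) := by
  have hπ := two_pi_pos
  rintro x (⟨h1, h2⟩ | ⟨h1, h2⟩)
  · have : -1 ≤ x / (2 * π) := by rw [le_div_iff₀ hπ]; linarith
    have : x / (2 * π) < -1 / 2 := by rw [div_lt_iff₀ hπ]; linarith
    rw [xiMap, if_pos (by linarith)]
    constructor <;> linarith
  · have : 1 / 2 ≤ x / (2 * π) := by rw [le_div_iff₀ hπ]; linarith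
    have : x / (2 * π) < 1 := by rw [div_lt_iff₀ hπ]; linarith
    rw [xiMap, if_neg (by linarith)]
    constructor <;> linarith

lemma xiInv_xiMap {x : ℝ} (hx : x ∈ E) : xiInv (xiMap x) = x := by
  have hπ := two_pi_pos
  rcases hx with ⟨h1, h2⟩ | ⟨h1, h2⟩
  · have : x / (2 * π) < -1 / 2 := by rw [div_lt_iff₀ hπ]; linarith
    rw [xiMap, if_pos (by linarith), xiInv, if_pos (by linarith)]
    field_simp; ring
  · have : 1 / 2 ≤ x / (2 * π) := by rw [le_div_iff₀ hπ]; linarith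
    rw [xiMap, if_neg (by linarith), xiInv, if_neg (by linarith)]
    field_simp

lemma bijOn_xiInv : BijOn xiInv (Ico (0:ℝ) 1) E :=
  InvOn.bijOn ⟨fun t _ => xiMap_xiInv t, fun _ => xiInv_xiMap⟩ (fun _ => xiInv_mem_E) mapsTo_xiMap

lemma tau_eq_xiInv_fract (x : ℝ) : tau x = xiInv (Int.fract (x / (2 * π))) := by
  have key : x - 2 * π * ⌊x / (2 * π)⌋ = 2 * π * Int.fract (x / (2 * π)) := by
    rw [Int.fract]; field_simp
  unfold tau xiInv
  rw [key]
  have := pi_pos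
  split_ifs with h h' h'
  · ring
  · nlinarith
  · nlinarith
  · rfl

lemma tau_mem_E (x : ℝ) : tau x ∈ E := by
  rw [tau_eq_xiInv_fract]
  exact bijOn_xiInv.mapsTo ⟨Int.fract_nonneg _, Int.fract_lt_one _⟩

lemma tau_eq_tau_iff {x y : ℝ} : tau x = tau y ↔ ∃ k : ℤ, x + 2 * π * k = y := by
  rw [tau_eq_xiInv_fract, tau_eq_xiInv_fract, xiInv_injective.eq_iff, Int.fract_eq_fract]
  have := two_pi_pos.ne'
  constructor
  · rintro ⟨z, hz⟩
    refine ⟨-z, ?_⟩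
    field_simp at hz
    push_cast; linarith
  · rintro ⟨k, rfl⟩
    refine ⟨-k, ?_⟩
    field_simp
    push_cast; ring

theorem iUnion_image_eq_preimage_and_pairwise_disjoint {α β : Type*} {T : ℤ → α → α}
    {f : α → β} {W : Set α} {S : Set β} (hf : BijOn f W S)
    (horbit : ∀ x ∈ W, ∀ y, f x = f y ↔ ∃ k, T k x = y)
    (hfree : ∀ x ∈ W, Function.Injective (T · x)) :
    (⋃ k, T k '' W) = f ⁻¹' S ∧ Pairwise fun k l => Disjoint (T k '' W) (T l '' W) := by
  refine ⟨Subset.antisymm ?_ fun y hy => ?_, fun k l hkl => disjoint_left.2 ?_⟩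
  · rintro _ ⟨_, ⟨k, rfl⟩, x, hx, rfl⟩
    rw [mem_preimage, ← (horbit x hx _).2 ⟨k, rfl⟩]
    exact hf.mapsTo hx
  · obtain ⟨x, hx, hxy⟩ := hf.surjOn hy
    obtain ⟨k, rfl⟩ := (horbit x hx y).1 hxy
    exact mem_iUnion_of_mem k (mem_image_of_mem _ hx)
  · rintro _ ⟨x₁, hx₁, rfl⟩ ⟨x₂, hx₂, hx⟩
    have hf₁₂ : f x₁ = f x₂ := by
      rw [(horbit x₁ hx₁ _).2 ⟨k, rfl⟩, (horbit x₂ hx₂ _).2 ⟨l, hx⟩]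
    obtain rfl := hf.injOn hx₁ hx₂ hf₁₂
    exact hkl (hfree x₁ hx₁ hx.symm)

lemma transPartition_of_bijOn_tau {W : Set ℝ} (hW : BijOn tau W E) : TransPartition W := by
  obtain ⟨hcover, hdisj⟩ := iUnion_image_eq_preimage_and_pairwise_disjoint
    (T := fun k x => x + 2 * π * k) hW (fun _ _ _ => tau_eq_tau_iff)
    (fun x _ k l hkl => by simpa [pi_ne_zero] using hkl)
  exact ⟨hcover.trans (eq_univ_of_forall tau_mem_E), hdisj⟩

lemma dilPartition_of_bijOn_delta {W : Set ℝ} (hW : BijOn delta W E) : DilPartition W := by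
  have hW0 : ∀ x ∈ W, x ≠ 0 := fun x hx => ne_zero_of_delta_mem_E (hW.mapsTo hx)
  obtain ⟨hcover, hdisj⟩ := iUnion_image_eq_preimage_and_pairwise_disjoint
    (T := fun k x => (2:ℝ) ^ k * x) hW (fun x hx _ => delta_eq_delta_iff (hW0 x hx))
    (fun x hx k l hkl => zpow_right_injective₀ two_pos (by norm_num)
      (mul_right_cancel₀ (hW0 x hx) hkl))
  refine ⟨hcover.trans ?_, hdisj⟩
  ext x
  exact ⟨ne_zero_of_delta_mem_E, delta_mem_E⟩

lemma hIso_eq_xiMap_tau {W : Set ℝ} (hW : InjOn delta W) {w t : ℝ} (hw : w ∈ W)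
    (ht : delta w = xiInv t) : hIso W t = xiMap (tau w) := by
  rw [hIso, ← ht, hW.leftInvOn_invFunOn hw]

lemma delta_zpow_mul_xiInv (k : ℤ) {t : ℝ} (ht : t ∈ Ico (0:ℝ) 1) :
    delta ((2:ℝ) ^ k * xiInv t) = xiInv t := by
  have hk : (2:ℝ) ^ (-k) * ((2:ℝ) ^ k * xiInv t) = xiInv t := by
    rw [← mul_assoc, ← zpow_add₀ two_ne_zero, neg_add_cancel, zpow_zero, one_mul]
  rw [delta_eq_of_zpow_mul_mem_E (hk ▸ xiInv_mem_E ht : _ ∈ E), hk]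

lemma tau_zpow_mul_xiInv (k : ℤ) (t : ℝ) :
    tau ((2:ℝ) ^ k * xiInv t) = xiInv (Int.fract ((2:ℝ) ^ k * (xiInv t / (2 * π)))) := by
  rw [tau_eq_xiInv_fract, mul_div_assoc]

lemma xiInv_div_two_pi (t : ℝ) : xiInv t / (2 * π) = if t < 1 / 2 then t - 1 else t := by
  unfold xiInv
  split_ifs <;> field_simp

def waveletSetOf (C : ℤ → Set ℝ) : Set ℝ :=
  ⋃ k, (fun t => (2:ℝ) ^ k * xiInv t) '' C k

section waveletSetOf

variable {C : ℤ → Set ℝ}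

lemma mem_waveletSetOf {w : ℝ} :
    w ∈ waveletSetOf C ↔ ∃ k, ∃ t ∈ C k, (2:ℝ) ^ k * xiInv t = w := by
  simp only [waveletSetOf, mem_iUnion, mem_image]

lemma measurableSet_waveletSetOf (hC : ∀ k, MeasurableSet (C k)) :
    MeasurableSet (waveletSetOf C) :=
  MeasurableSet.iUnion fun k => (hC k).image_of_measurable_injOn
    (measurable_xiInv.const_mul _)
    ((mul_right_injective₀ (zpow_ne_zero k two_ne_zero)).comp xiInv_injective).injOn

lemma bijOn_waveletSetOf (hCU : ⋃ k, C k = Ico (0:ℝ) 1)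
    (hCd : Pairwise (Function.onFun Disjoint C)) {f g : ℝ → ℝ} {S : Set ℝ}
    (hg : BijOn g (Ico (0:ℝ) 1) S)
    (hfg : ∀ k, ∀ t ∈ C k, f ((2:ℝ) ^ k * xiInv t) = g t) : BijOn f (waveletSetOf C) S := by
  have hCsub : ∀ k, C k ⊆ Ico (0:ℝ) 1 := fun k => hCU ▸ subset_iUnion C k
  refine ⟨fun w hw => ?_, fun w₁ hw₁ w₂ hw₂ hf => ?_, fun s hs => ?_⟩
  · obtain ⟨k, t, ht, rfl⟩ := mem_waveletSetOf.1 hw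
    rw [hfg k t ht]
    exact hg.mapsTo (hCsub k ht)
  · obtain ⟨k₁, t₁, ht₁, rfl⟩ := mem_waveletSetOf.1 hw₁
    obtain ⟨k₂, t₂, ht₂, rfl⟩ := mem_waveletSetOf.1 hw₂
    rw [hfg k₁ t₁ ht₁, hfg k₂ t₂ ht₂] at hf
    obtain rfl := hg.injOn (hCsub k₁ ht₁) (hCsub k₂ ht₂) hf
    obtain rfl := hCd.eq (not_disjoint_iff.2 ⟨t₁, ht₁, ht₂⟩)
    rfl
  · obtain ⟨t, ht, rfl⟩ := hg.surjOn hs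
    obtain ⟨k, hk⟩ := mem_iUnion.1 (hCU ▸ ht)
    exact ⟨_, mem_waveletSetOf.2 ⟨k, t, hk, rfl⟩, hfg k t hk⟩

theorem isRegularizedWaveletSet_waveletSetOf (hCm : ∀ k, MeasurableSet (C k))
    (hCU : ⋃ k, C k = Ico (0:ℝ) 1) (hCd : Pairwise (Function.onFun Disjoint C)) {h : ℝ → ℝ}
    (hh : BijOn h (Ico (0:ℝ) 1) (Ico (0:ℝ) 1))
    (hC : ∀ k, ∀ t ∈ C k, h t = Int.fract ((2:ℝ) ^ k * (xiInv t / (2 * π)))) :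
    IsRegularizedWaveletSet (waveletSetOf C) ∧ EqOn h (hIso (waveletSetOf C)) (Ico (0:ℝ) 1) := by
  have hCsub : ∀ k, C k ⊆ Ico (0:ℝ) 1 := fun k => hCU ▸ subset_iUnion C k
  have hδ : BijOn delta (waveletSetOf C) E := bijOn_waveletSetOf hCU hCd bijOn_xiInv
    fun k _ ht => delta_zpow_mul_xiInv k (hCsub k ht)
  have hτ : BijOn tau (waveletSetOf C) E := bijOn_waveletSetOf hCU hCd (bijOn_xiInv.comp hh)
    fun k t ht => by rw [tau_zpow_mul_xiInv, ← hC k t ht]; rfl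
  refine ⟨⟨measurableSet_waveletSetOf hCm, transPartition_of_bijOn_tau hτ,
    dilPartition_of_bijOn_delta hδ⟩, fun t ht => ?_⟩
  obtain ⟨k, hk⟩ := mem_iUnion.1 (hCU ▸ ht)
  rw [hIso_eq_xiMap_tau hδ.injOn (mem_waveletSetOf.2 ⟨k, t, hk, rfl⟩)
    (delta_zpow_mul_xiInv k ht), tau_zpow_mul_xiInv, ← hC k t hk, xiMap_xiInv]

end waveletSetOf

/-- Every map `h` with the properties (i)-(ii) of Proposition 2.3 is of the form
`h̃_W` for some regularized wavelet set `W`. -/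
theorem exists_regularized_of_isWaveletInduced (h : ℝ → ℝ) (hh : IsWaveletInduced h) :
    ∃ W : Set ℝ, IsRegularizedWaveletSet W ∧ Set.EqOn h (hIso W) (Ico (0:ℝ) 1) := by
  obtain ⟨hbij, -, A, B, hAm, hBm, hAU, hAd, hBU, hBd, hA, hB⟩ := hh
  have hAsub : ∀ k, A k ⊆ Ico (1 / 2) 1 := fun k => hAU ▸ subset_iUnion A k
  have hBsub : ∀ k, B k ⊆ Ico 0 (1 / 2) := fun k => hBU ▸ subset_iUnion B k
  have hAB : ∀ k l, Disjoint (A k) (B l) := fun k l =>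
    Ico_disjoint_Ico_same.symm.mono (hAsub k) (hBsub l)
  refine ⟨_, isRegularizedWaveletSet_waveletSetOf (C := fun k => A k ∪ B k)
    (fun k => (hAm k).union (hBm k)) ?_ ?_ hbij ?_⟩
  · rw [iUnion_union_distrib, hAU, hBU, union_comm,
      Ico_union_Ico_eq_Ico (by norm_num) (by norm_num)]
  · intro k l hkl
    simp only [Function.onFun, disjoint_union_left, disjoint_union_right]
    exact ⟨⟨hAd hkl, (hAB l k).symm⟩, hAB k l, hBd hkl⟩
  · rintro k t (ht | ht) <;> rw [xiInv_div_two_pi]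
    · rw [if_neg (hAsub k ht).1.not_gt, hA k t ht]
    · rw [if_pos (hBsub k ht).2, hB k t ht]

end
end

section
/- For every v ∈ WI₂ there exists a family {v_t}_{t∈[0,1]} of maps in WI₂ such that v₀ = v, v₁ = id, and for every s ∈ [0,1], μ({x ∈ [0,1) : v_t(x) ≠ v_s(x)}) → 0 as t → s. -/
open MeasureTheory Set Real Filter
open scoped symmDiff Classical

noncomputable section

/-! The chain is `v_t = v` on the forward `v`-orbit `S_t` of `[t,1)` and the identity on the rest
of `[0,1)`. Since `v(S_t) ⊆ S_t`, each `v_t` is again injective, hence in `WI₂`; moreover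
`S_0 ⊇ [0,1)` and `S_1 = ∅`. For `s ≤ t` the maps `v_s` and `v_t` differ only on the orbit of
`[s,t)`. A point not fixed by `v` is moved by some `x ↦ (x + l)/2^k` with `k ≥ 1`, so `v` at least
halves the measure of any set of non-fixed points; hence the orbit of a set `A` has measure at most
`(1 + 1/2 + 1/4 + ⋯) μ(A) = 2 μ(A)`, and `μ{v_t ≠ v_s} ≤ 2|t - s|`. -/

open Function Topology
open scoped Pointwise ENNReal

section ForwardOrbit

variable {α : Type*} (f : α → α)

def forwardOrbit (A : Set α) : Set α := ⋃ n, f^[n] '' A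

variable {f}

theorem subset_forwardOrbit (A : Set α) : A ⊆ forwardOrbit f A :=
  subset_iUnion_of_subset 0 (by simp)

theorem mapsTo_forwardOrbit (A : Set α) :
    MapsTo f (forwardOrbit f A) (forwardOrbit f A) := by
  rintro _ ⟨_, ⟨n, rfl⟩, x, hx, rfl⟩
  exact mem_iUnion.2 ⟨n + 1, x, hx, iterate_succ_apply' f n x⟩

theorem forwardOrbit_union (A B : Set α) :
    forwardOrbit f (A ∪ B) = forwardOrbit f A ∪ forwardOrbit f B := by
  simp only [forwardOrbit, image_union, iUnion_union_distrib]

theorem forwardOrbit_empty : forwardOrbit f ∅ = ∅ := by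
  simp [forwardOrbit]

theorem measurableSet_forwardOrbit [MeasurableSpace α] {s A : Set α} (hf : MapsTo f s s)
    (himage : ∀ B ⊆ s, MeasurableSet B → MeasurableSet (f '' B))
    (hA : A ⊆ s) (hAm : MeasurableSet A) : MeasurableSet (forwardOrbit f A) := by
  refine MeasurableSet.iUnion fun n => ?_
  induction n with
  | zero => simpa using hAm
  | succ n ih =>
    rw [iterate_succ', image_comp]
    exact himage _ ((hf.iterate n).image_subset.trans' (image_mono hA)) ih

/-- Every point of the orbit is either in `A` or the image of a non-fixed point of `f^[n] '' A`,
and the non-fixed parts shrink geometrically. -/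
theorem measure_forwardOrbit_le [MeasurableSpace α] {μ : MeasureTheory.Measure α}
    {s A : Set α} {r : ℝ≥0∞} (hf : MapsTo f s s) (hA : A ⊆ s)
    (hcontr : ∀ B ⊆ s \ fixedPoints f, μ (f '' B) ≤ r * μ B) :
    μ (forwardOrbit f A) ≤ (1 - r)⁻¹ * μ A := by
  set B : ℕ → Set α := fun n => f^[n] '' A \ fixedPoints f
  have hB : ∀ n, B n ⊆ s \ fixedPoints f := fun n =>
    sdiff_subset_sdiff_left ((hf.iterate n).image_subset.trans' (image_mono hA))
  have hcover : forwardOrbit f A ⊆ A ∪ ⋃ n, f '' B n := by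
    refine iUnion_subset fun n => ?_
    induction n with
    | zero => simp
    | succ n ih =>
      rintro _ ⟨x, hx, rfl⟩
      rw [iterate_succ_apply']
      by_cases hfix : IsFixedPt f (f^[n] x)
      · exact hfix.eq.symm ▸ ih ⟨x, hx, rfl⟩
      · exact Or.inr (mem_iUnion.2 ⟨n, _, ⟨⟨x, hx, rfl⟩, hfix⟩, rfl⟩)
  have hsucc : ∀ n, B (n + 1) ⊆ f '' B n := by
    rintro n _ ⟨⟨x, hx, rfl⟩, hfix⟩
    rw [iterate_succ_apply'] at hfix ⊢
    exact ⟨_, ⟨⟨x, hx, rfl⟩, fun h => hfix (congrArg f h)⟩, rfl⟩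
  have himage : ∀ n, μ (f '' B n) ≤ r ^ (n + 1) * μ A := by
    intro n
    induction n with
    | zero =>
      calc μ (f '' B 0) ≤ r * μ (B 0) := hcontr _ (hB 0)
        _ ≤ r ^ (0 + 1) * μ A := by
          rw [zero_add, pow_one]; gcongr; exact sdiff_subset.trans (by simp)
    | succ n ih =>
      calc μ (f '' B (n + 1)) ≤ r * μ (B (n + 1)) := hcontr _ (hB _)
        _ ≤ r * (r ^ (n + 1) * μ A) := by gcongr; exact (measure_mono (hsucc n)).trans ih
        _ = r ^ (n + 1 + 1) * μ A := by ring
  calc μ (forwardOrbit f A) ≤ μ (A ∪ ⋃ n, f '' B n) := measure_mono hcover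
    _ ≤ μ A + ∑' n, μ (f '' B n) :=
        (measure_union_le _ _).trans (by gcongr; exact measure_iUnion_le _)
    _ ≤ μ A + ∑' n, r ^ (n + 1) * μ A := by gcongr with n; exact himage n
    _ = (∑' n, r ^ n) * μ A := by
        rw [ENNReal.tsum_mul_right, tsum_eq_zero_add' (f := fun n => r ^ n) ENNReal.summable,
          pow_zero, add_mul, one_mul]
    _ = (1 - r)⁻¹ * μ A := by rw [ENNReal.tsum_geometric]

end ForwardOrbit

theorem Set.InjOn.piecewise_id {α : Type*} {f : α → α} {s S : Set α}
    [∀ x, Decidable (x ∈ s \ S)] (hf : InjOn f s) (hS : MapsTo f S S) :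
    InjOn ((s \ S).piecewise id f) s := by
  intro x hx y hy hxy
  by_cases hxS : x ∈ S <;> by_cases hyS : y ∈ S <;>
    simp only [piecewise, mem_sdiff, hx, hy, hxS, hyS, not_true, not_false_eq_true, and_true,
      and_false, if_true, if_false, id] at hxy
  · exact hf hx hy hxy
  · exact absurd (hxy ▸ hS hxS) hyS
  · exact absurd (hxy.symm ▸ hS hyS) hxS
  · exact hxy

section PiecewiseAffine

theorem Real.volume_image_affine (a b : ℝ) (s : Set ℝ) :
    volume ((fun x => a * x + b) '' s) = ENNReal.ofReal |a| * volume s := by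
  have h : (fun x => a * x + b) '' s = (fun x => x + b) '' (a • s) := by
    rw [← image_smul, image_image]; simp [smul_eq_mul]
  rw [h]
  simp [image_add_right, measure_preimage_add_right, Measure.addHaar_smul]

theorem MeasurableSet.image_affine {a : ℝ} (ha : a ≠ 0) (b : ℝ) {s : Set ℝ}
    (hs : MeasurableSet s) : MeasurableSet ((fun x => a * x + b) '' s) := by
  rw [image_eq_preimage_of_inverse (g := fun y => a⁻¹ * (y - b))
    (fun x => by field_simp; ring) (fun y => by field_simp; ring)]
  exact (by fun_prop : Measurable fun y : ℝ => a⁻¹ * (y - b)) hs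

variable {ι : Type*} {f : ℝ → ℝ} {D : ι → Set ℝ} {a b : ι → ℝ}

theorem image_eq_iUnion_of_eqOn_affine (hf : ∀ i, EqOn f (fun x => a i * x + b i) (D i))
    {B : Set ℝ} (hB : B ⊆ ⋃ i, D i) :
    f '' B = ⋃ i, (fun x => a i * x + b i) '' (B ∩ D i) := by
  ext y
  constructor
  · rintro ⟨x, hx, rfl⟩
    obtain ⟨i, hi⟩ := mem_iUnion.1 (hB hx)
    exact mem_iUnion.2 ⟨i, x, ⟨hx, hi⟩, (hf i hi).symm⟩
  · intro hy
    obtain ⟨i, x, ⟨hx, hi⟩, rfl⟩ := mem_iUnion.1 hy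
    exact ⟨x, hx, hf i hi⟩

theorem measurableSet_image_of_eqOn_affine [Countable ι] (hD : ∀ i, MeasurableSet (D i))
    (ha : ∀ i, a i ≠ 0) (hf : ∀ i, EqOn f (fun x => a i * x + b i) (D i))
    {B : Set ℝ} (hB : B ⊆ ⋃ i, D i) (hBm : MeasurableSet B) : MeasurableSet (f '' B) := by
  rw [image_eq_iUnion_of_eqOn_affine hf hB]
  exact MeasurableSet.iUnion fun i => (hBm.inter (hD i)).image_affine (ha i) _

theorem volume_image_le_of_eqOn_affine [Countable ι] (hD : ∀ i, MeasurableSet (D i))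
    (hdisj : Pairwise (Disjoint on D)) {r : ℝ} (ha : ∀ i, |a i| ≤ r)
    (hf : ∀ i, EqOn f (fun x => a i * x + b i) (D i)) {B : Set ℝ} (hB : B ⊆ ⋃ i, D i) :
    volume (f '' B) ≤ ENNReal.ofReal r * volume B := by
  have hsum : volume B = ∑' i, volume (B ∩ D i) := by
    rw [← Measure.restrict_eq_self volume hB, Measure.restrict_iUnion hdisj hD,
      Measure.sum_apply_of_countable]
    exact tsum_congr fun i => Measure.restrict_apply' (hD i)
  rw [image_eq_iUnion_of_eqOn_affine hf hB, hsum, ← ENNReal.tsum_mul_left]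
  refine (measure_iUnion_le _).trans (ENNReal.tsum_le_tsum fun i => ?_)
  rw [Real.volume_image_affine]
  gcongr
  exact ha i

end PiecewiseAffine

theorem measurableSet_sep_eq {α : Type*} [MeasurableSpace α] {s : Set α}
    (hs : MeasurableSet s) {v g : α → ℝ} (hv : Measurable (s.domRestrict v)) (hg : Measurable g) :
    MeasurableSet {x ∈ s | v x = g x} := by
  have h : {x ∈ s | v x = g x} = Subtype.val '' {y : s | v y = g y} := by
    ext x
    exact ⟨fun ⟨hx, he⟩ => ⟨⟨x, hx⟩, he, rfl⟩, by rintro ⟨⟨y, hy⟩, he, rfl⟩; exact ⟨hy, he⟩⟩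
  rw [h]
  exact hs.subtype_image (measurableSet_eq_fun hv (hg.comp measurable_subtype_coe))

section WI2

variable {v : ℝ → ℝ}

def wi2Piece (v : ℝ → ℝ) (k l : ℕ) : Set ℝ := {x ∈ Ico (0:ℝ) 1 | v x = (x + l) / 2 ^ k}

theorem eqOn_wi2Piece (k l : ℕ) :
    EqOn v (fun x => ((2:ℝ) ^ k)⁻¹ * x + l / 2 ^ k) (wi2Piece v k l) := fun x hx => by
  rw [hx.2]; ring

theorem MemWI2.measurableSet_wi2Piece (hv : MemWI2 v) (k l : ℕ) :
    MeasurableSet (wi2Piece v k l) :=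
  measurableSet_sep_eq measurableSet_Ico hv.1 (by fun_prop)

theorem MemWI2.measurableSet_image (hv : MemWI2 v) {B : Set ℝ} (hB : B ⊆ Ico 0 1)
    (hBm : MeasurableSet B) : MeasurableSet (v '' B) := by
  refine measurableSet_image_of_eqOn_affine (D := fun p : ℕ × ℕ => wi2Piece v p.1 p.2)
    (fun p => hv.measurableSet_wi2Piece p.1 p.2) (fun _ => by positivity)
    (fun p => eqOn_wi2Piece p.1 p.2) (fun x hx => ?_) hBm
  obtain ⟨k, l, hkl⟩ := hv.2.2.2 x (hB hx)
  exact mem_iUnion.2 ⟨(k, l), hB hx, hkl⟩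

/-- A non-fixed point is moved with `k ≥ 1`: for `k = 0` the value `x + l` lies in `[0,1)` only
if `l = 0`. -/
theorem MemWI2.exists_pow_succ_of_ne (hv : MemWI2 v) {x : ℝ} (hx : x ∈ Ico 0 1)
    (hvx : v x ≠ x) :
    ∃ k l : ℕ, v x = (x + l) / 2 ^ (k + 1) := by
  obtain ⟨k, l, hkl⟩ := hv.2.2.2 x hx
  rcases k with _ | k
  · have hlt : (l : ℝ) < 1 := by
      have := (hv.2.1 hx).2
      rw [hkl] at this
      linarith [hx.1, this.trans_eq' (by ring : (x + l) / 2 ^ 0 = x + l)]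
    have hl : l = 0 := by exact_mod_cast Nat.lt_one_iff.1 (by exact_mod_cast hlt)
    exact absurd (by simpa [hl] using hkl) hvx
  · exact ⟨k, l, hkl⟩

theorem MemWI2.volume_image_le (hv : MemWI2 v) {B : Set ℝ}
    (hB : B ⊆ Ico 0 1 \ fixedPoints v) : volume (v '' B) ≤ 2⁻¹ * volume B := by
  set P : ℕ → Set ℝ := fun n => wi2Piece v (n.unpair.1 + 1) n.unpair.2
  have hcover : B ⊆ ⋃ n, disjointed P n := by
    rw [iUnion_disjointed]
    intro x hx
    obtain ⟨k, l, hkl⟩ := hv.exists_pow_succ_of_ne (hB hx).1 (hB hx).2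
    exact mem_iUnion.2 ⟨Nat.pair k l, by simpa [P, Nat.unpair_pair] using ⟨(hB hx).1, hkl⟩⟩
  have hslope : ∀ n : ℕ, |((2:ℝ) ^ (n.unpair.1 + 1))⁻¹| ≤ 2⁻¹ := fun n => by
    rw [abs_of_pos (by positivity), pow_succ, mul_inv]
    exact mul_le_of_le_one_left (by norm_num) (inv_le_one_of_one_le₀ (one_le_pow₀ one_le_two))
  simpa using volume_image_le_of_eqOn_affine
    (MeasurableSet.disjointed fun n => hv.measurableSet_wi2Piece _ _) (disjoint_disjointed P)
    hslope (fun n => (eqOn_wi2Piece _ _).mono (disjointed_subset P n)) hcover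

theorem MemWI2.piecewise_id (hv : MemWI2 v) {S : Set ℝ} (hS : MeasurableSet S)
    (hvS : MapsTo v S S) : MemWI2 ((Ico 0 1 \ S).piecewise id v) := by
  obtain ⟨hm, hmaps, hinj, hform⟩ := hv
  refine ⟨?_, ?_, hinj.piecewise_id hvS, fun x hx => ?_⟩
  · exact Measurable.piecewise ((measurableSet_Ico.diff hS).preimage measurable_subtype_coe)
      measurable_subtype_coe hm
  · exact fun x hx => by by_cases h : x ∈ Ico 0 1 \ S <;> simp [h, hx, hmaps hx]
  · by_cases h : x ∈ Ico 0 1 \ S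
    · exact ⟨0, 0, by simp [h]⟩
    · simpa [h] using hform x hx

end WI2

section Chain

variable {v : ℝ → ℝ}

def wi2Chain (v : ℝ → ℝ) (t : ℝ) : ℝ → ℝ :=
  (Ico 0 1 \ forwardOrbit v (Ico t 1)).piecewise id v

theorem MemWI2.memWI2_wi2Chain (hv : MemWI2 v) {t : ℝ} (ht : 0 ≤ t) :
    MemWI2 (wi2Chain v t) := by
  have hseed : Ico t 1 ⊆ Ico 0 1 := Ico_subset_Ico_left ht
  exact hv.piecewise_id
    (measurableSet_forwardOrbit hv.2.1 (fun _ => hv.measurableSet_image) hseed measurableSet_Ico)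
    (mapsTo_forwardOrbit _)

theorem wi2Chain_zero : wi2Chain v 0 = v :=
  funext fun _ => piecewise_eq_of_notMem _ _ _ fun hx => hx.2 (subset_forwardOrbit _ hx.1)

theorem eqOn_wi2Chain_one : EqOn (wi2Chain v 1) id (Ico 0 1) := by
  intro x hx
  simp [wi2Chain, forwardOrbit_empty, hx]

theorem setOf_wi2Chain_ne_subset {s t : ℝ} (hst : s ≤ t) (ht : t ≤ 1) :
    {x ∈ Ico 0 1 | wi2Chain v t x ≠ wi2Chain v s x} ⊆ forwardOrbit v (Ico s t) := by
  rintro x ⟨hx, hne⟩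
  have hsplit :
      forwardOrbit v (Ico s 1) = forwardOrbit v (Ico s t) ∪ forwardOrbit v (Ico t 1) := by
    rw [← forwardOrbit_union, Ico_union_Ico_eq_Ico hst ht]
  by_cases hxt : x ∈ forwardOrbit v (Ico t 1)
  · have hxs : x ∈ forwardOrbit v (Ico s 1) := hsplit ▸ Or.inr hxt
    simp [wi2Chain, hxt, hxs] at hne
  · by_cases hxs : x ∈ forwardOrbit v (Ico s 1)
    · exact (hsplit ▸ hxs).resolve_right hxt
    · simp [wi2Chain, hx, hxt, hxs] at hne

theorem MemWI2.volume_wi2Chain_ne_le (hv : MemWI2 v) {s t : ℝ} (hs : 0 ≤ s) (hst : s ≤ t)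
    (ht : t ≤ 1) :
    volume {x ∈ Ico 0 1 | wi2Chain v t x ≠ wi2Chain v s x} ≤ ENNReal.ofReal (2 * (t - s)) :=
  calc volume {x ∈ Ico 0 1 | wi2Chain v t x ≠ wi2Chain v s x}
      ≤ volume (forwardOrbit v (Ico s t)) := measure_mono (setOf_wi2Chain_ne_subset hst ht)
    _ ≤ (1 - 2⁻¹)⁻¹ * volume (Ico s t) :=
        measure_forwardOrbit_le hv.2.1 (Ico_subset_Ico hs ht) fun _ => hv.volume_image_le
    _ = ENNReal.ofReal (2 * (t - s)) := by
        rw [ENNReal.one_sub_inv_two, inv_inv, Real.volume_Ico, ENNReal.ofReal_mul zero_le_two,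
          ENNReal.ofReal_ofNat]

theorem MemWI2.tendsto_volume_wi2Chain_ne (hv : MemWI2 v) {s : ℝ} (hs : s ∈ Icc 0 1) :
    Tendsto (fun t => volume {x ∈ Ico 0 1 | wi2Chain v t x ≠ wi2Chain v s x})
      (𝓝[Icc 0 1] s) (𝓝 0) := by
  have hbound : ∀ t ∈ Icc (0:ℝ) 1, volume {x ∈ Ico 0 1 | wi2Chain v t x ≠ wi2Chain v s x} ≤
      ENNReal.ofReal (2 * |t - s|) := by
    intro t ht
    rcases le_total s t with hst | hts
    · simpa [abs_of_nonneg (sub_nonneg.2 hst)] using hv.volume_wi2Chain_ne_le hs.1 hst ht.2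
    · simpa [abs_of_nonpos (sub_nonpos.2 hts), ne_comm] using
        hv.volume_wi2Chain_ne_le ht.1 hts hs.2
  have hlim : Tendsto (fun t => ENNReal.ofReal (2 * |t - s|)) (𝓝[Icc 0 1] s) (𝓝 0) := by
    have : Tendsto (fun t : ℝ => 2 * |t - s|) (𝓝 s) (𝓝 0) := by
      simpa using ((continuous_sub_right s).abs.const_mul 2).tendsto s
    simpa using (ENNReal.tendsto_ofReal this).mono_left nhdsWithin_le_nhds
  exact tendsto_of_tendsto_of_tendsto_of_le_of_le' tendsto_const_nhds hlim
    (Eventually.of_forall fun _ => zero_le) (eventually_mem_nhdsWithin.mono hbound)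

end Chain

/-- Every `v ∈ WI₂` can be connected to the identity by a chain
`{v_t}_{t∈[0,1]}` in `WI₂` which is continuous in the measure of the disagreement set. -/
theorem exists_WI2_chain_to_id (v : ℝ → ℝ) (hv : MemWI2 v) :
    ∃ vt : ℝ → (ℝ → ℝ),
      (∀ t ∈ Icc (0:ℝ) 1, MemWI2 (vt t)) ∧
      vt 0 = v ∧
      Set.EqOn (vt 1) id (Ico (0:ℝ) 1) ∧
      (∀ s ∈ Icc (0:ℝ) 1,
        Filter.Tendsto (fun t => volume {x ∈ Ico (0:ℝ) 1 | vt t x ≠ vt s x})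
          (nhdsWithin s (Icc (0:ℝ) 1)) (nhds 0)) :=
  ⟨wi2Chain v, fun _ ht => hv.memWI2_wi2Chain ht.1, wi2Chain_zero, eqOn_wi2Chain_one,
    fun _ hs => hv.tendsto_volume_wi2Chain_ne hs⟩
end
end
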